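/- G_{v0}(k)·G_{v1}(k) = G_{v1}(k)·G_{v0}(k), i.e. the product of the two congruence subgroups (in either order) is a group, and it equals the subgroup generated by G_{v0}(k) and G_{v1}(k). -/

import Mathlib

open Matrix Pointwise
open scoped OnePoint

noncomputable section

/-- `ϖ` is a uniformizer of the nonarchimedean field `F`. -/
def IsUniformizer (F : Type*) [NormedField F] (ϖ : F) : Prop :=
  ϖ ≠ 0 ∧ ‖ϖ‖ < 1 ∧ ∀ x : F, ‖x‖ < 1 → ‖x‖ ≤ ‖ϖ‖

/-- The principal congruence subgroup `G_{v₀}(k)` of level `k`: matrices in `GL₂(𝒪)`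
congruent to the identity modulo `ϖ^k` (entrywise, each entry of `g - 1` lies in `ϖ^k 𝒪`,
i.e. has norm at most `‖ϖ‖^k`). -/
def Gv0 (F : Type*) [NormedField F] (ϖ : F) (k : ℕ) : Set (GL (Fin 2) F) :=
  {g | ‖(g : Matrix (Fin 2) (Fin 2) F) 0 0 - 1‖ ≤ ‖ϖ‖ ^ k ∧
       ‖(g : Matrix (Fin 2) (Fin 2) F) 0 1‖ ≤ ‖ϖ‖ ^ k ∧
       ‖(g : Matrix (Fin 2) (Fin 2) F) 1 0‖ ≤ ‖ϖ‖ ^ k ∧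
       ‖(g : Matrix (Fin 2) (Fin 2) F) 1 1 - 1‖ ≤ ‖ϖ‖ ^ k}

/-- The diagonal matrix `diag(ϖ, 1)` as an element of `GL₂(F)`. -/
def dmat (F : Type*) [Field F] (ϖ : F) (h : ϖ ≠ 0) : GL (Fin 2) F :=
  Matrix.GeneralLinearGroup.mkOfDetNeZero !![ϖ, 0; 0, 1]
    (by simpa [Matrix.det_fin_two_of] using h)

/-- `G_{v₁}(k) = diag(ϖ,1) · G_{v₀}(k) · diag(ϖ,1)⁻¹`. -/
def Gv1 (F : Type*) [NormedField F] (ϖ : F) (h : ϖ ≠ 0) (k : ℕ) : Set (GL (Fin 2) F) :=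
  (fun g => dmat F ϖ h * g * (dmat F ϖ h)⁻¹) '' Gv0 F ϖ k

/-- The explicit set `H` of matrices `[[1+ϖ^k a, ϖ^k b],[ϖ^{k-1} c, 1+ϖ^k d]]`, `a,b,c,d ∈ 𝒪`;
this is the edge group `G_e(k)`. -/
def Ge (F : Type*) [NormedField F] (ϖ : F) (k : ℕ) : Set (GL (Fin 2) F) :=
  {g | ‖(g : Matrix (Fin 2) (Fin 2) F) 0 0 - 1‖ ≤ ‖ϖ‖ ^ k ∧
       ‖(g : Matrix (Fin 2) (Fin 2) F) 0 1‖ ≤ ‖ϖ‖ ^ k ∧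
       ‖(g : Matrix (Fin 2) (Fin 2) F) 1 0‖ ≤ ‖ϖ‖ ^ (k - 1) ∧
       ‖(g : Matrix (Fin 2) (Fin 2) F) 1 1 - 1‖ ≤ ‖ϖ‖ ^ k}

/-- The explicit description of `G_{v₁}(k)`: matrices
`[[1+ϖ^k a, ϖ^{k+1} b],[ϖ^{k-1} c, 1+ϖ^k d]]` with `a,b,c,d ∈ 𝒪`. -/
def Gv1ex (F : Type*) [NormedField F] (ϖ : F) (k : ℕ) : Set (GL (Fin 2) F) :=
  {g | ‖(g : Matrix (Fin 2) (Fin 2) F) 0 0 - 1‖ ≤ ‖ϖ‖ ^ k ∧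
       ‖(g : Matrix (Fin 2) (Fin 2) F) 0 1‖ ≤ ‖ϖ‖ ^ (k + 1) ∧
       ‖(g : Matrix (Fin 2) (Fin 2) F) 1 0‖ ≤ ‖ϖ‖ ^ (k - 1) ∧
       ‖(g : Matrix (Fin 2) (Fin 2) F) 1 1 - 1‖ ≤ ‖ϖ‖ ^ k}

open scoped Classical in
/-- The right Möbius action of `g = [[a,b],[c,d]]` on `ℙ¹(F) = F ∪ {∞}` (here modelled as
`Option F`, with `none = ∞`): `z·g = (az+c)/(bz+d)`, `∞·g = a/b`, with value `∞` when the
denominator vanishes. -/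
def moeb (F : Type*) [Field F] (g : Matrix (Fin 2) (Fin 2) F) : Option F → Option F
  | Option.some z => if g 0 1 * z + g 1 1 = 0 then Option.none
      else Option.some ((g 0 0 * z + g 1 0) / (g 0 1 * z + g 1 1))
  | Option.none => if g 0 1 = 0 then Option.none else Option.some (g 0 0 / g 0 1)

/-- The orbit of `z ∈ ℙ¹(F)` under a set `S` of elements of `GL₂(F)` acting on the right by
Möbius transformations. -/
def orb (F : Type*) [Field F] (S : Set (GL (Fin 2) F)) (z : Option F) : Set (Option F) :=
  {w | ∃ g ∈ S, moeb F (g : Matrix (Fin 2) (Fin 2) F) z = w}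

/-- `D` is an orbit of `S` on `ℙ¹(F)`. -/
def IsOrbit (F : Type*) [Field F] (S : Set (GL (Fin 2) F)) (D : Set (Option F)) : Prop :=
  ∃ z, D = orb F S z

/-- The region `B_w(∞, |ϖ|) = {w ∈ ℙ¹(F) : |1/w| ≤ |ϖ|} = {|w| ≥ |ϖ|⁻¹} ∪ {∞}`. -/
def regionInfty (F : Type*) [NormedField F] (ϖ : F) : Set (Option F) :=
  {w | w = Option.none ∨ ∃ z : F, w = Option.some z ∧ ‖ϖ‖⁻¹ ≤ ‖z‖}

/-- The coordinate `1/w` on `ℙ¹(F)`, with `1/∞ = 0`. -/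
def invc (F : Type*) [Field F] : Option F → F
  | Option.none => 0
  | Option.some z => z⁻¹

/-- The residue field of `F` has cardinality `q`: there are exactly `q` classes in
`𝒪/(ϖ)`, witnessed by a set of representatives. -/
def ResidueCard (F : Type*) [NormedField F] (ϖ : F) (q : ℕ) : Prop :=
  ∃ s : Finset F, s.card = q ∧ (∀ x ∈ s, ‖x‖ ≤ 1) ∧
    ∀ x : F, ‖x‖ ≤ 1 → ∃! y, y ∈ s ∧ ‖x - y‖ ≤ ‖ϖ‖

/-- The conjugate `h S h⁻¹` of a set of matrices. -/
def conjSet (F : Type*) [Field F] (h : GL (Fin 2) F) (S : Set (GL (Fin 2) F)) :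
    Set (GL (Fin 2) F) :=
  (fun g => h * g * h⁻¹) '' S

/-- The matrix `g_α = [[1,0],[α,ϖ]]` as an element of `GL₂(F)`. -/
def galpha (F : Type*) [Field F] (ϖ α : F) (h : ϖ ≠ 0) : GL (Fin 2) F :=
  Matrix.GeneralLinearGroup.mkOfDetNeZero !![1, 0; α, ϖ]
    (by simpa [Matrix.det_fin_two_of] using h)

/-- The diagonal matrix `diag(1, ϖ^n)` as an element of `GL₂(F)`. -/
def dmatN (F : Type*) [Field F] (ϖ : F) (h : ϖ ≠ 0) (n : ℕ) : GL (Fin 2) F :=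
  Matrix.GeneralLinearGroup.mkOfDetNeZero !![1, 0; 0, ϖ ^ n]
    (by simpa [Matrix.det_fin_two_of] using pow_ne_zero n h)


/-! The edge group `G_e(k) = [[1 + ϖ^k 𝒪, ϖ^k 𝒪], [ϖ^(k-1) 𝒪, 1 + ϖ^k 𝒪]]` contains both
`G_{v₀}(k)` and `G_{v₁}(k) = [[1 + ϖ^k 𝒪, ϖ^(k+1) 𝒪], [ϖ^(k-1) 𝒪, 1 + ϖ^k 𝒪]]`, and the
ultrametric inequality makes it a group. Conversely, for `g ∈ G_e(k)` put `c = g₁₀ / g₁₁` and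
`u(c) = [[1, 0], [c, 1]]`: then `g = (g u(-c)) u(c)` with `g u(-c) ∈ G_{v₀}(k)` (its lower-left
entry vanishes) and `u(c) ∈ G_{v₁}(k)`. So `G_{v₀}(k) G_{v₁}(k) = G_e(k)`; taking inverses gives the
other order, and a product of two subgroups that is a subgroup is the subgroup they generate. -/

section Ultrametric

variable {F : Type*} [NormedField F] [IsUltrametricDist F]

theorem norm_add_le_of_le_of_le {x y : F} {a : ℝ} (hx : ‖x‖ ≤ a) (hy : ‖y‖ ≤ a) :
    ‖x + y‖ ≤ a :=
  (IsUltrametricDist.norm_add_le_max x y).trans (max_le hx hy)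

theorem norm_le_one_of_norm_sub_one_le {x : F} {a : ℝ} (h : ‖x - 1‖ ≤ a) (ha : a ≤ 1) :
    ‖x‖ ≤ 1 := by
  simpa using norm_add_le_of_le_of_le (h.trans ha) (norm_one (α := F)).le

theorem norm_eq_one_of_norm_sub_one_lt_one {x : F} (h : ‖x - 1‖ < 1) : ‖x‖ = 1 := by
  simpa [h.le] using
    IsUltrametricDist.norm_add_eq_max_of_norm_ne_norm (x := x - 1) (y := 1)
      (by rw [norm_one]; exact h.ne)

theorem norm_mul_add_sub_one_le {a b c : F} {α : ℝ} (ha : ‖a - 1‖ ≤ α) (hb : ‖b - 1‖ ≤ α)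
    (hc : ‖c‖ ≤ α) (hα : α ≤ 1) : ‖a * b + c - 1‖ ≤ α := by
  rw [show a * b + c - 1 = (a - 1) * b + ((b - 1) + c) by ring]
  exact norm_add_le_of_le_of_le
    ((norm_mul_le_of_le ha (norm_le_one_of_norm_sub_one_le hb hα)).trans_eq (mul_one α))
    (norm_add_le_of_le_of_le hb hc)

theorem norm_mul_sub_one_le {a b : F} {α : ℝ} (ha : ‖a - 1‖ ≤ α) (hb : ‖b - 1‖ ≤ α)
    (hα : α ≤ 1) : ‖a * b - 1‖ ≤ α := by
  simpa using norm_mul_add_sub_one_le ha hb (c := 0) (by simpa using (norm_nonneg _).trans ha) hα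

theorem norm_mul_add_mul_le {a b c d : F} {β : ℝ} (ha : ‖a‖ ≤ 1) (hb : ‖b‖ ≤ β) (hc : ‖c‖ ≤ β)
    (hd : ‖d‖ ≤ 1) : ‖a * b + c * d‖ ≤ β :=
  norm_add_le_of_le_of_le ((norm_mul_le_of_le ha hb).trans_eq (one_mul β))
    ((norm_mul_le_of_le hc hd).trans_eq (mul_one β))

end Ultrametric

section CongrSet

variable {F : Type*} [NormedField F] (ϖ : F) {k m n : ℕ}

/-- The matrices `[[1 + ϖ^k a, ϖ^m b], [ϖ^n c, 1 + ϖ^k d]]` with `a, b, c, d ∈ 𝒪`; for instance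
`Gv0 F ϖ k = congrSet ϖ k k k` and the edge group `Ge F ϖ k = congrSet ϖ k k (k - 1)`. -/
def congrSet (ϖ : F) (k m n : ℕ) : Set (GL (Fin 2) F) :=
  {g | ‖g 0 0 - 1‖ ≤ ‖ϖ‖ ^ k ∧ ‖g 0 1‖ ≤ ‖ϖ‖ ^ m ∧ ‖g 1 0‖ ≤ ‖ϖ‖ ^ n ∧ ‖g 1 1 - 1‖ ≤ ‖ϖ‖ ^ k}

theorem congrSet_mono (hϖ : ‖ϖ‖ ≤ 1) {m' n' : ℕ} (hm : m' ≤ m) (hn : n' ≤ n) :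
    congrSet ϖ k m n ⊆ congrSet ϖ k m' n' := fun _ ⟨h00, h01, h10, h11⟩ =>
  ⟨h00, h01.trans (pow_le_pow_of_le_one (norm_nonneg ϖ) hϖ hm),
    h10.trans (pow_le_pow_of_le_one (norm_nonneg ϖ) hϖ hn), h11⟩

theorem one_mem_congrSet : (1 : GL (Fin 2) F) ∈ congrSet ϖ k m n := by
  simp [congrSet]

theorem norm_mul_le_pow_of_le (hϖ : ‖ϖ‖ ≤ 1) (hkmn : k ≤ m + n) {x y : F} (hx : ‖x‖ ≤ ‖ϖ‖ ^ m)
    (hy : ‖y‖ ≤ ‖ϖ‖ ^ n) : ‖x * y‖ ≤ ‖ϖ‖ ^ k :=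
  (norm_mul_le_of_le hx hy).trans <| (pow_add _ m n).symm.trans_le <|
    pow_le_pow_of_le_one (norm_nonneg ϖ) hϖ hkmn

theorem coe_dmat_mul_mul_inv (hϖ : ϖ ≠ 0) (g : GL (Fin 2) F) :
    ((dmat F ϖ hϖ * g * (dmat F ϖ hϖ)⁻¹ : GL (Fin 2) F) : Matrix (Fin 2) (Fin 2) F) =
      !![g 0 0, ϖ * g 0 1; ϖ⁻¹ * g 1 0, g 1 1] := by
  have hinv : (((dmat F ϖ hϖ)⁻¹ : GL (Fin 2) F) : Matrix (Fin 2) (Fin 2) F) =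
      !![ϖ⁻¹, 0; 0, 1] := by
    rw [GeneralLinearGroup.coe_inv]
    refine inv_eq_right_inv ?_
    simp [dmat, one_fin_two, hϖ]
  rw [GeneralLinearGroup.coe_mul, GeneralLinearGroup.coe_mul, hinv]
  ext i j
  fin_cases i <;> fin_cases j <;>
    simp [dmat, mul_apply, vecMul, dotProduct, Fin.sum_univ_two, hϖ, mul_comm]

theorem dmat_mul_mul_inv_mem_congrSet_iff (hϖ : ϖ ≠ 0) (g : GL (Fin 2) F) :
    dmat F ϖ hϖ * g * (dmat F ϖ hϖ)⁻¹ ∈ congrSet ϖ k (m + 1) n ↔ g ∈ congrSet ϖ k m (n + 1) := by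
  have hr : 0 < ‖ϖ‖ := norm_pos_iff.2 hϖ
  simp only [congrSet, Set.mem_ofPred_eq, coe_dmat_mul_mul_inv]
  simp [norm_mul, pow_succ', inv_mul_le_iff₀ hr, mul_le_mul_iff_right₀ hr]

theorem Gv1_eq_congrSet (hϖ : ϖ ≠ 0) (hk : 1 ≤ k) :
    Gv1 F ϖ hϖ k = congrSet ϖ k (k + 1) (k - 1) := by
  obtain ⟨n, rfl⟩ : ∃ n, k = n + 1 := ⟨k - 1, by omega⟩
  ext x
  simp only [Gv1, Set.mem_image, Nat.add_sub_cancel]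
  constructor
  · rintro ⟨g, hg, rfl⟩
    exact (dmat_mul_mul_inv_mem_congrSet_iff ϖ hϖ g).2 hg
  · intro hx
    refine ⟨(dmat F ϖ hϖ)⁻¹ * x * dmat F ϖ hϖ, (dmat_mul_mul_inv_mem_congrSet_iff ϖ hϖ _).1 ?_,
      by group⟩
    simpa [mul_assoc] using hx

def lowerUnipotent (c : F) : GL (Fin 2) F :=
  GeneralLinearGroup.mkOfDetNeZero !![1, 0; c, 1] (by simp [det_fin_two_of])

theorem lowerUnipotent_neg_mul_self (c : F) : lowerUnipotent (-c) * lowerUnipotent c = 1 := by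
  ext i j
  fin_cases i <;> fin_cases j <;> simp [lowerUnipotent, mul_apply]

variable [IsUltrametricDist F]

theorem mul_mem_congrSet (hϖ : ‖ϖ‖ ≤ 1) (hkmn : k ≤ m + n) {g h : GL (Fin 2) F}
    (hg : g ∈ congrSet ϖ k m n) (hh : h ∈ congrSet ϖ k m n) : g * h ∈ congrSet ϖ k m n := by
  obtain ⟨g00, g01, g10, g11⟩ := hg
  obtain ⟨h00, h01, h10, h11⟩ := hh
  have hk : ‖ϖ‖ ^ k ≤ 1 := pow_le_one₀ (norm_nonneg ϖ) hϖ
  simp only [congrSet, Set.mem_ofPred_eq, GeneralLinearGroup.coe_mul, mul_apply, Fin.sum_univ_two]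
  refine ⟨norm_mul_add_sub_one_le g00 h00 (norm_mul_le_pow_of_le ϖ hϖ hkmn g01 h10) hk,
    norm_mul_add_mul_le (norm_le_one_of_norm_sub_one_le g00 hk) h01 g01
      (norm_le_one_of_norm_sub_one_le h11 hk), ?_, ?_⟩
  · rw [add_comm]
    exact norm_mul_add_mul_le (norm_le_one_of_norm_sub_one_le g11 hk) h10 g10
      (norm_le_one_of_norm_sub_one_le h00 hk)
  · rw [add_comm]
    exact norm_mul_add_sub_one_le g11 h11 (norm_mul_le_pow_of_le ϖ hϖ (by omega) g10 h01) hk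

theorem inv_mem_congrSet (hϖ : ‖ϖ‖ < 1) (hk : 1 ≤ k) (hkmn : k ≤ m + n) {g : GL (Fin 2) F}
    (hg : g ∈ congrSet ϖ k m n) : g⁻¹ ∈ congrSet ϖ k m n := by
  obtain ⟨g00, g01, g10, g11⟩ := hg
  have hk1 : ‖ϖ‖ ^ k < 1 := pow_lt_one₀ (norm_nonneg ϖ) hϖ (by omega)
  set δ := (g : Matrix (Fin 2) (Fin 2) F).det with hδ
  have hδ1 : ‖δ - 1‖ ≤ ‖ϖ‖ ^ k := by
    rw [show δ - 1 = g 0 0 * g 1 1 + -(g 0 1 * g 1 0) - 1 by rw [hδ, det_fin_two]; ring]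
    exact norm_mul_add_sub_one_le g00 g11
      (by rw [norm_neg]; exact norm_mul_le_pow_of_le ϖ hϖ.le hkmn g01 g10) hk1.le
  have hδn : ‖δ‖ = 1 := norm_eq_one_of_norm_sub_one_lt_one (hδ1.trans_lt hk1)
  have hδinv : ‖δ⁻¹ - 1‖ ≤ ‖ϖ‖ ^ k := by
    have hδ0 : δ ≠ 0 := norm_ne_zero_iff.1 (by rw [hδn]; exact one_ne_zero)
    rwa [show δ⁻¹ - 1 = -(δ⁻¹ * (δ - 1)) by field_simp; ring, norm_neg, norm_mul, norm_inv, hδn,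
      inv_one, one_mul]
  have hinv : ((g⁻¹ : GL (Fin 2) F) : Matrix (Fin 2) (Fin 2) F) =
      δ⁻¹ • !![g 1 1, -g 0 1; -g 1 0, g 0 0] := by
    rw [GeneralLinearGroup.coe_inv, inv_def, adjugate_fin_two, Ring.inverse_eq_inv']
  simp only [congrSet, Set.mem_ofPred_eq, hinv, Matrix.smul_apply, of_apply, cons_val',
    cons_val_zero, cons_val_one, empty_val', cons_val_fin_one, smul_eq_mul]
  refine ⟨norm_mul_sub_one_le hδinv g11 hk1.le, ?_, ?_, norm_mul_sub_one_le hδinv g00 hk1.le⟩ <;>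
    rwa [norm_mul, norm_neg, norm_inv, hδn, inv_one, one_mul]

def congrSubgroup (hϖ : ‖ϖ‖ < 1) (hk : 1 ≤ k) (hkmn : k ≤ m + n) : Subgroup (GL (Fin 2) F) where
  carrier := congrSet ϖ k m n
  one_mem' := one_mem_congrSet ϖ
  mul_mem' := mul_mem_congrSet ϖ hϖ.le hkmn
  inv_mem' := inv_mem_congrSet ϖ hϖ hk hkmn

theorem congrSet_subset_mul (hϖ : ‖ϖ‖ < 1) (hk : 1 ≤ k) (hkmn : k ≤ m + n) (l m' : ℕ) :
    congrSet ϖ k m n ⊆ congrSet ϖ k m l * congrSet ϖ k m' n := by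
  rintro g ⟨g00, g01, g10, g11⟩
  have hg11 : ‖g 1 1‖ = 1 :=
    norm_eq_one_of_norm_sub_one_lt_one (g11.trans_lt (pow_lt_one₀ (norm_nonneg ϖ) hϖ (by omega)))
  have hg11' : g 1 1 ≠ 0 := norm_ne_zero_iff.1 (by rw [hg11]; exact one_ne_zero)
  set c := g 1 0 / g 1 1
  have hc : ‖c‖ ≤ ‖ϖ‖ ^ n := by rwa [norm_div, hg11, div_one]
  refine ⟨g * lowerUnipotent (-c), ?_, lowerUnipotent c, ?_, by
    simp [mul_assoc, lowerUnipotent_neg_mul_self]⟩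
  · have hgu : ((g * lowerUnipotent (-c) : GL (Fin 2) F) : Matrix (Fin 2) (Fin 2) F) =
        !![g 0 0 - g 0 1 * c, g 0 1; 0, g 1 1] := by
      ext i j
      fin_cases i <;> fin_cases j <;>
        simp [lowerUnipotent, mul_apply, c, mul_div_cancel₀ _ hg11', sub_eq_add_neg]
    refine ⟨?_, by simpa [hgu] using g01, by simp [hgu], by simpa [hgu] using g11⟩
    rw [hgu, of_apply, cons_val', cons_val_zero, cons_val_zero, sub_right_comm, sub_eq_add_neg]
    exact norm_add_le_of_le_of_le g00
      (by rw [norm_neg]; exact norm_mul_le_pow_of_le ϖ hϖ.le hkmn g01 hc)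
  · simp [congrSet, lowerUnipotent, hc]

theorem congrSet_mul_congrSet (hϖ : ‖ϖ‖ < 1) (hk : 1 ≤ k) (hkmn : k ≤ m + n) {l m' : ℕ}
    (hl : n ≤ l) (hm' : m ≤ m') : congrSet ϖ k m l * congrSet ϖ k m' n = congrSet ϖ k m n := by
  refine subset_antisymm (Set.mul_subset_iff.2 fun a ha b hb => ?_)
    (congrSet_subset_mul ϖ hϖ hk hkmn l m')
  exact mul_mem_congrSet ϖ hϖ.le hkmn (congrSet_mono ϖ hϖ.le le_rfl hl ha)
    (congrSet_mono ϖ hϖ.le hm' le_rfl hb)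

end CongrSet

namespace Subgroup

variable {G : Type*} [Group G] {H K L : Subgroup G}

theorem mul_comm_of_mul_eq (h : (H : Set G) * K = L) : (H : Set G) * K = K * H := by
  rw [h, ← inv_coe_set (H := L), ← h, _root_.mul_inv_rev, inv_coe_set, inv_coe_set]

theorem coe_closure_union_eq_mul_of_mul_eq (h : (H : Set G) * K = L) :
    (closure ((H : Set G) ∪ K) : Set G) = H * K := by
  refine subset_antisymm ?_ (mul_subset (subset_closure.trans' Set.subset_union_left)
    (subset_closure.trans' Set.subset_union_right))
  rw [h, SetLike.coe_subset_coe, closure_le, ← h]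
  exact Set.union_subset (Set.subset_mul_left _ K.one_mem) (Set.subset_mul_right _ H.one_mem)

end Subgroup

theorem statement2_general (F : Type*) [NontriviallyNormedField F] [IsUltrametricDist F]
    (ϖ : F) (hϖ : IsUniformizer F ϖ) (k : ℕ) (hk : 1 ≤ k) :
    Gv0 F ϖ k * Gv1 F ϖ hϖ.1 k = Gv1 F ϖ hϖ.1 k * Gv0 F ϖ k ∧
    Gv0 F ϖ k * Gv1 F ϖ hϖ.1 k =
      ((Subgroup.closure (Gv0 F ϖ k ∪ Gv1 F ϖ hϖ.1 k) : Subgroup (GL (Fin 2) F)) :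
        Set (GL (Fin 2) F)) := by
  have hϖ1 : ‖ϖ‖ < 1 := hϖ.2.1
  let G0 := congrSubgroup ϖ hϖ1 hk (m := k) (n := k) (by omega)
  let G1 := congrSubgroup ϖ hϖ1 hk (m := k + 1) (n := k - 1) (by omega)
  let Gedge := congrSubgroup ϖ hϖ1 hk (m := k) (n := k - 1) (by omega)
  have hGv1 : Gv1 F ϖ hϖ.1 k = G1 := Gv1_eq_congrSet ϖ hϖ.1 hk
  have hprod : (G0 : Set (GL (Fin 2) F)) * G1 = Gedge :=
    congrSet_mul_congrSet ϖ hϖ1 hk (by omega) (by omega) (by omega)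
  rw [hGv1]
  exact ⟨Subgroup.mul_comm_of_mul_eq hprod, (Subgroup.coe_closure_union_eq_mul_of_mul_eq hprod).symm⟩

theorem statement2 (p : ℕ) [Fact p.Prime] (F : Type*) [NontriviallyNormedField F]
    [IsUltrametricDist F] [NormedAlgebra ℚ_[p] F] [FiniteDimensional ℚ_[p] F]
    (ϖ : F) (hϖ : IsUniformizer F ϖ) (k : ℕ) (hk : 1 ≤ k) :
    Gv0 F ϖ k * Gv1 F ϖ hϖ.1 k = Gv1 F ϖ hϖ.1 k * Gv0 F ϖ k ∧
    Gv0 F ϖ k * Gv1 F ϖ hϖ.1 k =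
      ((Subgroup.closure (Gv0 F ϖ k ∪ Gv1 F ϖ hϖ.1 k) : Subgroup (GL (Fin 2) F)) :
        Set (GL (Fin 2) F)) :=
  statement2_general F ϖ hϖ k hk
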